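/- (Monotonicity in the heat-transfer coefficient.) Assume α₂ > α₃ and A∞ > B. For h > h₂, let ξ₁(h) > z₀ be the unique solution of the reduced Robin system with coefficient h, and let ξ₂(h) ≥ 0 satisfy erf(ξ₂(h)·√(α₁/α₂)) = H(ξ₁(h)). Then for all h₂ < h < h': (i) ξ₁(h) < ξ₁(h'); (ii) ξ₂(h) < ξ₂(h'); and (iii) A(h) < A(h'), where A(h) := (B·k₃/(h·√(π·α₃)) + A∞·erf(ξ₂(h)·√(α₁/α₃)))/(k₃/(h·√(π·α₃)) + erf(ξ₂(h)·√(α₁/α₃))). -/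

import Mathlib

noncomputable section

/-- The error function `erf x = (2/√π) ∫₀ˣ exp(−s²) ds`. -/
def erf (x : ℝ) : ℝ := (2 / Real.sqrt Real.pi) * ∫ s in (0:ℝ)..x, Real.exp (-(s^2))

/-- The complementary error function. -/
def erfc (x : ℝ) : ℝ := 1 - erf x

/-- Physical data of the three-phase Stefan problem: positive thermal conductivities,
specific heats, mass density, latent heats, and temperatures `B > C > D`. -/
structure Params where
  k₁ : ℝ
  k₂ : ℝ
  k₃ : ℝ
  c₁ : ℝ
  c₂ : ℝ
  c₃ : ℝ
  ρ : ℝ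
  ℓ₁ : ℝ
  ℓ₂ : ℝ
  B : ℝ
  C : ℝ
  D : ℝ
  hk₁ : 0 < k₁
  hk₂ : 0 < k₂
  hk₃ : 0 < k₃
  hc₁ : 0 < c₁
  hc₂ : 0 < c₂
  hc₃ : 0 < c₃
  hρ : 0 < ρ
  hℓ₁ : 0 < ℓ₁
  hℓ₂ : 0 < ℓ₂
  hBC : C < B
  hCD : D < C

namespace Params

/-- Thermal diffusivity of phase 1. -/
def α₁ (p : Params) : ℝ := p.k₁ / (p.ρ * p.c₁)

/-- Thermal diffusivity of phase 2. -/
def α₂ (p : Params) : ℝ := p.k₂ / (p.ρ * p.c₂)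

/-- Thermal diffusivity of phase 3. -/
def α₃ (p : Params) : ℝ := p.k₃ / (p.ρ * p.c₃)

/-- Stefan number `Ste₁ = c₁(C−D)/ℓ₁`. -/
def Ste₁ (p : Params) : ℝ := p.c₁ * (p.C - p.D) / p.ℓ₁

/-- Stefan number `Ste₂ = c₂(B−C)/ℓ₂`. -/
def Ste₂ (p : Params) : ℝ := p.c₂ * (p.B - p.C) / p.ℓ₂

/-- `φ(z) = z + (Ste₁/√π) exp(−z²)/erfc(z)`. -/
def φ (p : Params) (z : ℝ) : ℝ :=
  z + (p.Ste₁ / Real.sqrt Real.pi) * Real.exp (-(z^2)) / erfc z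

/-- `H(z) = erf(z√(α₁/α₂)) − (Ste₂/√π)(ℓ₂/ℓ₁)√(k₂c₁/(k₁c₂)) exp(−z²α₁/α₂)/φ(z)`. -/
def H (p : Params) (z : ℝ) : ℝ :=
  erf (z * Real.sqrt (p.α₁ / p.α₂)) -
    (p.Ste₂ / Real.sqrt Real.pi) * (p.ℓ₂ / p.ℓ₁) *
      Real.sqrt (p.k₂ * p.c₁ / (p.k₁ * p.c₂)) *
      (Real.exp (-(z^2) * (p.α₁ / p.α₂)) / p.φ z)

/-- `Q(z) = (ℓ₁/ℓ₂) φ(z) exp(z² α₁/α₂)`. -/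
def Q (p : Params) (z : ℝ) : ℝ :=
  (p.ℓ₁ / p.ℓ₂) * p.φ z * Real.exp (z^2 * (p.α₁ / p.α₂))

/-- The function `T` arising from the Robin (convective) boundary condition with
heat-transfer coefficient `h₀` and bulk temperature `Ainf`. -/
def T (p : Params) (h₀ Ainf : ℝ) (z : ℝ) : ℝ :=
  (p.Ste₂ / (Real.sqrt Real.pi * p.c₂)) * ((Ainf - p.B) / (p.B - p.C)) *
    Real.sqrt (p.k₃ * p.c₁ * p.c₃ / p.k₁) *
    (Real.exp (-(z^2) * p.α₁ * (1 / p.α₃ - 1 / p.α₂)) /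
      (p.k₃ / (h₀ * Real.sqrt (Real.pi * p.α₃)) + erf (z * Real.sqrt (p.α₁ / p.α₃)))) -
  z * Real.exp (z^2 * (p.α₁ / p.α₂))

/-- The function `V` arising from the Dirichlet boundary condition with temperature `A`. -/
def V (p : Params) (A : ℝ) (z : ℝ) : ℝ :=
  ((A - p.B) / p.ℓ₂) * Real.sqrt (p.c₁ * p.c₃ * p.k₃ / (Real.pi * p.k₁)) *
    (Real.exp (-(z^2) * (p.α₁ / p.α₃ - p.α₁ / p.α₂)) / erf (z * Real.sqrt (p.α₁ / p.α₃))) -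
  z * Real.exp (z^2 * (p.α₁ / p.α₂))

/-- The function `P` arising from the Neumann boundary condition with flux coefficient `q₀`. -/
def P (p : Params) (q₀ : ℝ) (z : ℝ) : ℝ :=
  Real.exp (z^2 * (p.α₁ / p.α₂)) *
    (-z + (q₀ / p.ℓ₂) * Real.sqrt (p.c₁ / (p.ρ * p.k₁)) * Real.exp (-(z^2) * (p.α₁ / p.α₃)))

/-- Critical heat-transfer coefficient `h₂`. -/
def h2 (p : Params) (Ainf z₀ : ℝ) : ℝ :=
  ((p.B - p.C) / (Ainf - p.B)) *
    Real.sqrt (p.k₂ * p.k₃ * p.c₂ / (Real.pi * p.c₃ * p.α₃)) *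
    (1 / erf (z₀ * Real.sqrt (p.α₁ / p.α₂)))

/-- Critical heat-flux coefficient `q₂`. -/
def q2 (p : Params) (z₀ : ℝ) : ℝ :=
  p.k₂ * (p.B - p.C) / (Real.sqrt (p.α₂ * Real.pi) * erf (z₀ * Real.sqrt (p.α₁ / p.α₂)))

end Params

/-! `H` is strictly increasing on `[0, ∞)` and `erf` is strictly increasing, so `ξ₂` moves in the
same direction as `ξ₁`. If `ξ₁(h') ≤ ξ₁(h)` for some `h < h'`, then `ξ₂(h') ≤ ξ₂(h)`, and since `Q`
is nondecreasing, `T_h` is nonincreasing in `z` and strictly increasing in `h`,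
`Q(ξ₁(h')) ≤ Q(ξ₁(h)) = T_h(ξ₂(h)) ≤ T_h(ξ₂(h')) < T_{h'}(ξ₂(h')) = Q(ξ₁(h'))`.
Finally `A(h)` is a weighted mean of `B` and `A∞` whose weight on `A∞` increases with `h`.

The monotonicity of `φ`, hence of `Q` and `H`, comes from that of the Mills ratio
`exp(-x²)/erfc x`: the derivative of `erfc x · exp x²` is `2 (x erfc x exp x² - 1/√π)`, which is
nonpositive by Mills' inequality `erfc x ≤ exp(-x²)/(√π x)` for `x > 0`. -/

open Real MeasureTheory Set Filter intervalIntegral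

lemma integrable_exp_neg_sq : Integrable fun s : ℝ => exp (-s ^ 2) := by
  simpa using integrable_exp_neg_mul_sq one_pos

lemma hasDerivAt_erf (x : ℝ) : HasDerivAt erf (2 / √π * exp (-x ^ 2)) x :=
  ((continuous_exp.comp (continuous_pow 2).neg).integral_hasStrictDerivAt 0 x).hasDerivAt
    |>.const_mul (2 / √π)

lemma erf_strictMono : StrictMono erf :=
  strictMono_of_hasDerivAt_pos hasDerivAt_erf fun _ => by positivity

lemma erf_zero : erf 0 = 0 := by simp [erf]

lemma erf_nonneg {x : ℝ} (hx : 0 ≤ x) : 0 ≤ erf x :=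
  erf_zero ▸ erf_strictMono.monotone hx

lemma erf_pos {x : ℝ} (hx : 0 < x) : 0 < erf x :=
  erf_zero ▸ erf_strictMono hx

lemma erfc_eq_integral_Ioi (x : ℝ) : erfc x = 2 / √π * ∫ s in Ioi x, exp (-s ^ 2) := by
  have h₀ : ∫ s in Ioi (0 : ℝ), exp (-s ^ 2) = √π / 2 := by
    simpa using integral_gaussian_Ioi 1
  have hsplit := integral_interval_add_Ioi (a := 0) (b := x)
    integrable_exp_neg_sq.integrableOn integrable_exp_neg_sq.integrableOn
  rw [h₀] at hsplit
  have : √π ≠ 0 := by positivity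
  rw [erfc, erf, eq_sub_of_add_eq' hsplit]
  field_simp

lemma erfc_pos (x : ℝ) : 0 < erfc x := by
  rw [erfc_eq_integral_Ioi]
  refine mul_pos (by positivity) ?_
  rw [setIntegral_pos_iff_support_of_nonneg_ae (.of_forall fun _ => (exp_pos _).le)
    integrable_exp_neg_sq.integrableOn]
  simp [Function.support, (exp_pos _).ne']

lemma erfc_le_exp_neg_sq_div {x : ℝ} (hx : 0 < x) : erfc x ≤ exp (-x ^ 2) / (√π * x) := by
  have hderiv (s : ℝ) : HasDerivAt (fun s => -exp (-s ^ 2) / 2) (s * exp (-s ^ 2)) s := by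
    refine ((hasDerivAt_pow 2 s).fun_neg.exp.fun_neg.div_const 2).congr_deriv ?_
    ring
  have hlim : Tendsto (fun s : ℝ => -exp (-s ^ 2) / 2) atTop (nhds 0) := by
    simpa using ((tendsto_exp_atBot.comp
      (tendsto_neg_atTop_atBot.comp (tendsto_pow_atTop two_ne_zero))).neg.div_const 2)
  have hint : IntegrableOn (fun s => s * exp (-s ^ 2)) (Ioi x) :=
    integrableOn_Ioi_deriv_of_nonneg' (fun s _ => hderiv s)
      (fun s hs => mul_nonneg (hx.trans hs).le (exp_pos _).le) hlim
  have hval : ∫ s in Ioi x, s * exp (-s ^ 2) = exp (-x ^ 2) / 2 := by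
    rw [integral_Ioi_of_hasDerivAt_of_tendsto' (fun s _ => hderiv s) hint hlim]
    ring
  have hle : ∫ s in Ioi x, exp (-s ^ 2) ≤ ∫ s in Ioi x, s * exp (-s ^ 2) / x :=
    setIntegral_mono_on integrable_exp_neg_sq.integrableOn (hint.div_const x) measurableSet_Ioi
      fun s hs => by
        rw [le_div_iff₀ hx, mul_comm]
        exact mul_le_mul_of_nonneg_right (le_of_lt hs) (exp_pos _).le
  rw [MeasureTheory.integral_div, hval] at hle
  rw [erfc_eq_integral_Ioi]
  calc 2 / √π * ∫ s in Ioi x, exp (-s ^ 2) ≤ 2 / √π * (exp (-x ^ 2) / 2 / x) := by gcongr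
    _ = exp (-x ^ 2) / (√π * x) := by field_simp

lemma antitone_erfc_mul_exp_sq : Antitone fun x => erfc x * exp (x ^ 2) := by
  have hderiv (x : ℝ) : HasDerivAt (fun x => erfc x * exp (x ^ 2))
      (2 * (x * (erfc x * exp (x ^ 2)) - 1 / √π)) x := by
    refine (((hasDerivAt_erf x).const_sub 1).fun_mul (hasDerivAt_pow 2 x).exp).congr_deriv ?_
    rw [erfc, exp_neg]
    field_simp
    ring
  refine antitone_of_hasDerivAt_nonpos hderiv fun x => ?_
  have hE : 0 < erfc x * exp (x ^ 2) := mul_pos (erfc_pos x) (exp_pos _)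
  rcases le_or_gt x 0 with hx | hx
  · have : x * (erfc x * exp (x ^ 2)) ≤ 0 := mul_nonpos_of_nonpos_of_nonneg hx hE.le
    have : 0 < 1 / √π := by positivity
    simp only [Pi.zero_apply]
    linarith
  · have hmills := mul_le_mul_of_nonneg_left (erfc_le_exp_neg_sq_div hx)
      (mul_nonneg hx.le (exp_pos (x ^ 2)).le)
    have : x * exp (x ^ 2) * (exp (-x ^ 2) / (√π * x)) = 1 / √π := by
      rw [exp_neg]
      field_simp
    simp only [Pi.zero_apply]
    nlinarith

lemma monotone_exp_neg_sq_div_erfc : Monotone fun x => exp (-x ^ 2) / erfc x := by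
  intro a b hab
  have key (x : ℝ) : exp (-x ^ 2) / erfc x = (erfc x * exp (x ^ 2))⁻¹ := by
    rw [mul_inv, ← exp_neg, div_eq_mul_inv, mul_comm]
  simp only [key]
  exact inv_anti₀ (mul_pos (erfc_pos b) (exp_pos _)) (antitone_erfc_mul_exp_sq hab)

lemma weighted_mean_lt_weighted_mean {B A a a' e e' : ℝ} (hBA : B < A) (ha' : 0 < a')
    (haa' : a' ≤ a) (he : 0 ≤ e) (hee' : e < e') :
    (B * a + A * e) / (a + e) < (B * a' + A * e') / (a' + e') := by
  rw [div_lt_div_iff₀ (by linarith) (by linarith)]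
  have : e * a' < e' * a := by nlinarith
  nlinarith [mul_pos (sub_pos.2 hBA) (sub_pos.2 this)]

namespace Params

variable (p : Params)

lemma α₁_pos : 0 < p.α₁ := div_pos p.hk₁ (mul_pos p.hρ p.hc₁)
lemma α₂_pos : 0 < p.α₂ := div_pos p.hk₂ (mul_pos p.hρ p.hc₂)
lemma α₃_pos : 0 < p.α₃ := div_pos p.hk₃ (mul_pos p.hρ p.hc₃)
lemma Ste₁_pos : 0 < p.Ste₁ := div_pos (mul_pos p.hc₁ (sub_pos.2 p.hCD)) p.hℓ₁
lemma Ste₂_pos : 0 < p.Ste₂ := div_pos (mul_pos p.hc₂ (sub_pos.2 p.hBC)) p.hℓ₂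

lemma φ_pos {z : ℝ} (hz : 0 ≤ z) : 0 < p.φ z := by
  have := p.Ste₁_pos
  have := erfc_pos z
  unfold φ
  positivity

lemma strictMono_φ : StrictMono p.φ := by
  intro a b hab
  have hmills : exp (-a ^ 2) / erfc a ≤ exp (-b ^ 2) / erfc b :=
    monotone_exp_neg_sq_div_erfc hab.le
  have := p.Ste₁_pos
  simp only [φ, mul_div_assoc]
  exact add_lt_add_of_lt_of_le hab (by gcongr)

lemma monotoneOn_Q : MonotoneOn p.Q (Ici 0) := by
  intro a (ha : 0 ≤ a) b (hb : 0 ≤ b) hab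
  have := p.φ_pos hb
  have := p.strictMono_φ.monotone hab
  have := p.hℓ₁
  have := p.hℓ₂
  have := p.α₁_pos
  have := p.α₂_pos
  unfold Q
  gcongr

lemma strictMonoOn_H : StrictMonoOn p.H (Ici 0) := by
  intro a (ha : 0 ≤ a) b (hb : 0 ≤ b) hab
  have := p.φ_pos ha
  have := p.Ste₂_pos
  have := p.hℓ₁
  have := p.hℓ₂
  have := p.α₁_pos
  have := p.α₂_pos
  have hφ : p.φ a ≤ p.φ b := (p.strictMono_φ hab).le
  have herf : erf (a * √(p.α₁ / p.α₂)) < erf (b * √(p.α₁ / p.α₂)) := erf_strictMono (by gcongr)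
  have hdecay : exp (-b ^ 2 * (p.α₁ / p.α₂)) / p.φ b ≤ exp (-a ^ 2 * (p.α₁ / p.α₂)) / p.φ a := by
    gcongr
  have hK : 0 ≤ p.Ste₂ / √π * (p.ℓ₂ / p.ℓ₁) * √(p.k₂ * p.c₁ / (p.k₁ * p.c₂)) := by positivity
  unfold H
  linarith [mul_le_mul_of_nonneg_left hdecay hK]

lemma T_lt_T_of_lt {Ainf h h' z : ℝ} (hAinf : p.B < Ainf) (hz : 0 ≤ z) (hh : 0 < h)
    (hhh' : h < h') : p.T h Ainf z < p.T h' Ainf z := by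
  have := sub_pos.2 p.hBC
  have := p.Ste₂_pos
  have := p.hc₂
  have := p.hk₃
  have := p.hc₁
  have := p.hc₃
  have := p.hk₁
  have := p.α₃_pos
  have := hh.trans hhh'
  have := erf_nonneg (mul_nonneg hz (sqrt_nonneg (p.α₁ / p.α₃)))
  unfold T
  gcongr

lemma antitoneOn_T {Ainf h : ℝ} (hα : p.α₃ ≤ p.α₂) (hAinf : p.B ≤ Ainf) (hh : 0 < h) :
    AntitoneOn (p.T h Ainf) (Ici 0) := by
  intro a (ha : 0 ≤ a) b (hb : 0 ≤ b) hab
  have := sub_pos.2 p.hBC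
  have := p.Ste₂_pos
  have := p.hc₂
  have := p.hk₃
  have := p.α₁_pos
  have := p.α₂_pos
  have := p.α₃_pos
  have := erf_nonneg (mul_nonneg ha (sqrt_nonneg (p.α₁ / p.α₃)))
  have : 0 ≤ 1 / p.α₃ - 1 / p.α₂ := sub_nonneg.2 (one_div_le_one_div_of_le p.α₃_pos hα)
  have : erf (a * √(p.α₁ / p.α₃)) ≤ erf (b * √(p.α₁ / p.α₃)) :=
    erf_strictMono.monotone (by gcongr)
  unfold T
  gcongr

lemma h2_pos {Ainf z₀ : ℝ} (hAinf : p.B < Ainf) (hz₀ : 0 < z₀) : 0 < p.h2 Ainf z₀ := by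
  have := sub_pos.2 p.hBC
  have := p.hk₂
  have := p.hk₃
  have := p.hc₂
  have := p.hc₃
  have := p.α₃_pos
  have := erf_pos (mul_pos hz₀ (sqrt_pos.2 (div_pos p.α₁_pos p.α₂_pos)))
  unfold h2
  positivity

end Params

/-- Monotonicity in the heat-transfer coefficient. -/
theorem robin_monotone_in_h (p : Params) (Ainf z₀ : ℝ) (ξ₁ ξ₂ : ℝ → ℝ)
    (hα : p.α₃ < p.α₂) (hAinf : p.B < Ainf)
    (hz₀ : 0 < z₀ ∧ p.H z₀ = 0)
    (hsol : ∀ h : ℝ, p.h2 Ainf z₀ < h →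
      z₀ < ξ₁ h ∧ 0 ≤ ξ₂ h ∧
      erf (ξ₂ h * Real.sqrt (p.α₁ / p.α₂)) = p.H (ξ₁ h) ∧
      p.Q (ξ₁ h) = p.T h Ainf (ξ₂ h)) :
    ∀ h h' : ℝ, p.h2 Ainf z₀ < h → h < h' →
      ξ₁ h < ξ₁ h' ∧ ξ₂ h < ξ₂ h' ∧
      (p.B * p.k₃ / (h * Real.sqrt (Real.pi * p.α₃)) +
          Ainf * erf (ξ₂ h * Real.sqrt (p.α₁ / p.α₃))) /
        (p.k₃ / (h * Real.sqrt (Real.pi * p.α₃)) +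
          erf (ξ₂ h * Real.sqrt (p.α₁ / p.α₃))) <
      (p.B * p.k₃ / (h' * Real.sqrt (Real.pi * p.α₃)) +
          Ainf * erf (ξ₂ h' * Real.sqrt (p.α₁ / p.α₃))) /
        (p.k₃ / (h' * Real.sqrt (Real.pi * p.α₃)) +
          erf (ξ₂ h' * Real.sqrt (p.α₁ / p.α₃))) := by
  intro h h' hh hhh'
  have hh₀ : 0 < h := (p.h2_pos hAinf hz₀.1).trans hh
  obtain ⟨hz₀ξ₁, hξ₂₀, hH, hQT⟩ := hsol h hh
  obtain ⟨hz₀ξ₁', hξ₂₀', hH', hQT'⟩ := hsol h' (hh.trans hhh')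
  have hξ₁₀ : (0 : ℝ) ≤ ξ₁ h := hz₀.1.le.trans hz₀ξ₁.le
  have hξ₁₀' : (0 : ℝ) ≤ ξ₁ h' := hz₀.1.le.trans hz₀ξ₁'.le
  have herf : StrictMono fun x => erf (x * √(p.α₁ / p.α₂)) :=
    erf_strictMono.comp (strictMono_mul_right_of_pos (sqrt_pos.2 (div_pos p.α₁_pos p.α₂_pos)))
  have hξ : ξ₂ h < ξ₂ h' ↔ ξ₁ h < ξ₁ h' := by
    rw [← herf.lt_iff_lt, hH, hH']
    exact p.strictMonoOn_H.lt_iff_lt hξ₁₀ hξ₁₀'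
  have hξ₁ : ξ₁ h < ξ₁ h' := by
    by_contra! hle
    have hξ₂le : ξ₂ h' ≤ ξ₂ h := by
      contrapose! hle
      exact hξ.1 hle
    have hcycle := calc p.Q (ξ₁ h') ≤ p.Q (ξ₁ h) := p.monotoneOn_Q hξ₁₀' hξ₁₀ hle
      _ = p.T h Ainf (ξ₂ h) := hQT
      _ ≤ p.T h Ainf (ξ₂ h') := p.antitoneOn_T hα.le hAinf.le hh₀ hξ₂₀' hξ₂₀ hξ₂le
      _ < p.T h' Ainf (ξ₂ h') := p.T_lt_T_of_lt hAinf hξ₂₀' hh₀ hhh'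
      _ = p.Q (ξ₁ h') := hQT'.symm
    exact hcycle.false
  have hξ₂ : ξ₂ h < ξ₂ h' := hξ.2 hξ₁
  refine ⟨hξ₁, hξ₂, ?_⟩
  have := p.hk₃
  have := p.α₃_pos
  have := p.α₁_pos
  have := hh₀.trans hhh'
  simp only [mul_div_assoc]
  exact weighted_mean_lt_weighted_mean hAinf (by positivity) (by gcongr)
    (erf_nonneg (by positivity)) (erf_strictMono (by gcongr))
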